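/- arXiv:cond-mat/0603018 — 5 statements merged into one kernel-verified Lean document; each statement's English description precedes it below -/
import Mathlib

section
/- With G¹ = sup_{x,x'} ∑_y |μ(y|x) - μ(y|x')| and G² = ∑_{x,y} |μ(x,y) - μ(x)μ(y)|, one has G² ≤ G¹ ≤ (2/μ_*) G², where μ_* = min_x μ(x) is assumed strictly positive. -/
/-!
Write `μ(x, y) = μ(x) p_x(y)` with `p_x = μ(·|x)`, so that `μ(y) = ∑ₓ μ(x) p_x(y)` and
`G² = ∑ₓ μ(x) ‖p_x - μ_Y‖₁`. By convexity of the `ℓ¹` distance, `‖p_x - μ_Y‖₁` is at most the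
`μ`-average of `‖p_x - p_{x'}‖₁ ≤ G¹`, which gives `G² ≤ G¹`. Conversely, by the triangle
inequality through `μ_Y`, `‖p_x - p_{x'}‖₁ ≤ ‖p_x - μ_Y‖₁ + ‖p_{x'} - μ_Y‖₁`, and each summand is
at most `G² / μ_*` because `μ_* ‖p_x - μ_Y‖₁ ≤ μ(x) ‖p_x - μ_Y‖₁ ≤ G²`.
-/

open Finset

section MixtureDistance

variable {X Y : Type*} [Fintype X] [Fintype Y]

theorem sum_abs_sub_le_sum_abs_sub_add (f g h : Y → ℝ) :
    ∑ y, |f y - g y| ≤ ∑ y, |f y - h y| + ∑ y, |g y - h y| := by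
  rw [← sum_add_distrib]
  exact sum_le_sum fun y _ => (abs_sub_le _ (h y) _).trans_eq (by rw [abs_sub_comm (h y)])

theorem sum_abs_sub_weightedSum_le {w : X → ℝ} (hw : ∀ x, 0 ≤ w x) (hw1 : ∑ x, w x = 1)
    (f : Y → ℝ) (p : X → Y → ℝ) :
    ∑ y, |f y - ∑ x, w x * p x y| ≤ ∑ x, w x * ∑ y, |f y - p x y| := by
  have hmix : ∀ y, f y - ∑ x, w x * p x y = ∑ x, w x * (f y - p x y) := fun y => by
    simp only [mul_sub, sum_sub_distrib, ← sum_mul, hw1, one_mul]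
  calc ∑ y, |f y - ∑ x, w x * p x y|
      ≤ ∑ y, ∑ x, |w x * (f y - p x y)| := by
        simp only [hmix]
        exact sum_le_sum fun y _ => abs_sum_le_sum_abs _ _
    _ = ∑ x, w x * ∑ y, |f y - p x y| := by
        rw [sum_comm]
        simp only [abs_mul, abs_of_nonneg (hw _), mul_sum]

variable {w : X → ℝ} (p : X → Y → ℝ)

theorem weightedSum_sum_abs_sub_mixture_le_iSup (hw : ∀ x, 0 ≤ w x) (hw1 : ∑ x, w x = 1) :
    ∑ x, w x * ∑ y, |p x y - ∑ x', w x' * p x' y|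
      ≤ ⨆ x, ⨆ x', ∑ y, |p x y - p x' y| := by
  set G1 := ⨆ x, ⨆ x', ∑ y, |p x y - p x' y|
  have hG1 : ∀ x x', ∑ y, |p x y - p x' y| ≤ G1 := fun x x' =>
    (le_ciSup (Set.finite_range _).bddAbove x').trans
      (le_ciSup (Set.finite_range fun x => ⨆ x', ∑ y, |p x y - p x' y|).bddAbove x)
  calc ∑ x, w x * ∑ y, |p x y - ∑ x', w x' * p x' y|
      ≤ ∑ x, w x * ∑ x', w x' * ∑ y, |p x y - p x' y| :=
        sum_le_sum fun x _ =>
          mul_le_mul_of_nonneg_left (sum_abs_sub_weightedSum_le hw hw1 (p x) p) (hw x)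
    _ ≤ ∑ x, w x * ∑ x', w x' * G1 := by
        gcongr with x _ x' _
        · exact hw x
        · exact hw x'
        · exact hG1 x x'
    _ = G1 := by simp only [← sum_mul, hw1, one_mul]

theorem iSup_sum_abs_sub_le_two_div_iInf_mul [Nonempty X] (hw : ∀ x, 0 < w x) :
    ⨆ x, ⨆ x', ∑ y, |p x y - p x' y|
      ≤ 2 / (⨅ x, w x) * ∑ x, w x * ∑ y, |p x y - ∑ x', w x' * p x' y| := by
  set D : X → ℝ := fun x => ∑ y, |p x y - ∑ x', w x' * p x' y|
  set G2 := ∑ x, w x * D x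
  obtain ⟨x₀, hx₀⟩ := exists_eq_ciInf_of_finite (f := w)
  have hwmin : ∀ x, ⨅ x, w x ≤ w x := fun x => ciInf_le (Set.finite_range w).bddBelow x
  have hmin_pos : 0 < ⨅ x, w x := hx₀ ▸ hw x₀
  have hD : ∀ x, D x ≤ G2 / ⨅ x, w x := fun x => by
    rw [le_div_iff₀ hmin_pos, mul_comm]
    calc (⨅ x, w x) * D x ≤ w x * D x :=
          mul_le_mul_of_nonneg_right (hwmin x) (sum_nonneg fun _ _ => abs_nonneg _)
      _ ≤ G2 := single_le_sum (f := fun x => w x * D x)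
          (fun x _ => mul_nonneg (hw x).le (sum_nonneg fun _ _ => abs_nonneg _)) (mem_univ x)
  refine ciSup_le fun x => ciSup_le fun x' => ?_
  calc ∑ y, |p x y - p x' y| ≤ D x + D x' := sum_abs_sub_le_sum_abs_sub_add _ _ _
    _ ≤ G2 / (⨅ x, w x) + G2 / (⨅ x, w x) := add_le_add (hD x) (hD x')
    _ = 2 / (⨅ x, w x) * G2 := by ring

end MixtureDistance

theorem stmt_5_general {X Y : Type*} [Fintype X] [Fintype Y] (μ : X × Y → ℝ)
    (hμs : ∑ z, μ z = 1)
    (hpos : ∀ x, 0 < ∑ y, μ (x, y)) :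
    let μX : X → ℝ := fun x => ∑ y, μ (x, y)
    let μY : Y → ℝ := fun y => ∑ x, μ (x, y)
    let G1 : ℝ := ⨆ x : X, ⨆ x' : X, ∑ y, |μ (x, y) / μX x - μ (x', y) / μX x'|
    let G2 : ℝ := ∑ x, ∑ y, |μ (x, y) - μX x * μY y|
    let μstar : ℝ := ⨅ x : X, μX x
    G2 ≤ G1 ∧ G1 ≤ (2 / μstar) * G2 := by
  intro μX μY G1 G2 μstar
  have hμX1 : ∑ x, μX x = 1 := by rw [← hμs, Fintype.sum_prod_type]
  have : Nonempty X := by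
    by_contra hX
    simp [not_nonempty_iff.mp hX] at hμX1
  set p : X → Y → ℝ := fun x y => μ (x, y) / μX x
  have hμ_eq : ∀ x y, μ (x, y) = μX x * p x y := fun x y => (mul_div_cancel₀ _ (hpos x).ne').symm
  have hμY : ∀ y, μY y = ∑ x, μX x * p x y := fun y => sum_congr rfl fun x _ => hμ_eq x y
  have hG2 : G2 = ∑ x, μX x * ∑ y, |p x y - ∑ x', μX x' * p x' y| := by
    refine sum_congr rfl fun x _ => ?_
    rw [mul_sum]
    refine sum_congr rfl fun y _ => ?_
    rw [hμ_eq x y, hμY y, ← mul_sub, abs_mul, abs_of_pos (hpos x)]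
  rw [hG2]
  exact ⟨weightedSum_sum_abs_sub_mixture_le_iSup p (fun x => (hpos x).le) hμX1,
    iSup_sum_abs_sub_le_two_div_iInf_mul p hpos⟩

theorem stmt_5 {X Y : Type*} [Fintype X] [Fintype Y] [Nonempty X] (μ : X × Y → ℝ)
    (hμ : ∀ z, 0 ≤ μ z) (hμs : ∑ z, μ z = 1)
    (hpos : ∀ x, 0 < ∑ y, μ (x, y)) :
    let μX : X → ℝ := fun x => ∑ y, μ (x, y)
    let μY : Y → ℝ := fun y => ∑ x, μ (x, y)
    let G1 : ℝ := ⨆ x : X, ⨆ x' : X, ∑ y, |μ (x, y) / μX x - μ (x', y) / μX x'|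
    let G2 : ℝ := ∑ x, ∑ y, |μ (x, y) - μX x * μY y|
    let μstar : ℝ := ⨅ x : X, μX x
    G2 ≤ G1 ∧ G1 ≤ (2 / μstar) * G2 :=
  stmt_5_general μ hμs hpos
end

section
/- Define G³ = sup_{f : 𝒳 → [-1,1]} |E[f(X) f̂(Y)] - E[f(X)] E[f̂(Y)]| where f̂(y) = E[f(X) | Y = y], and G² = ∑_{x,y} |μ(x,y) - μ(x)μ(y)|. Then (G²/|𝒳|)² ≤ G³. -/
/-!
Testing `f` against the indicator of a single point `x₀` already gives a large covariance.
For every `f`, the covariance of `f(X)` and `f̂(Y)` is the variance of `f̂(Y)`, because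
`E[f(X) f̂(Y)] = E[f̂(Y)²]` and `E[f̂(Y)] = E[f(X)]`. For `f = 1_{x₀}` this variance is
`∑_y μ(y) (μ(x₀|y) - μ(x₀))²`, which by Jensen is at least `(∑_y |μ(x₀,y) - μ(x₀)μ(y)|)²`.
Choosing `x₀` whose row sum is at least the average `G²/|𝒳|` gives the bound.
-/

open Finset

theorem sq_sum_mul_le_sum_mul_sq {ι : Type*} (s : Finset ι) {w d : ι → ℝ}
    (hw : ∀ i ∈ s, 0 ≤ w i) (hw₁ : ∑ i ∈ s, w i = 1) :
    (∑ i ∈ s, w i * d i) ^ 2 ≤ ∑ i ∈ s, w i * d i ^ 2 := by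
  have := sum_sq_le_sum_mul_sum_of_sq_le_mul s (r := fun i => w i * d i) hw
    (fun i hi => mul_nonneg (hw i hi) (sq_nonneg (d i))) (fun i _ => le_of_eq (by ring))
  rwa [hw₁, one_mul] at this

theorem exists_sum_div_card_le {ι : Type*} [Fintype ι] [Nonempty ι] (a : ι → ℝ) :
    ∃ i, (∑ j, a j) / Fintype.card ι ≤ a i := by
  obtain ⟨i, -, hi⟩ := exists_le_of_sum_le univ_nonempty (f := fun _ => (∑ j, a j) / Fintype.card ι)
    (g := a) (by rw [sum_const, card_univ, nsmul_eq_mul, mul_div_cancel₀ _ (by positivity)])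
  exact ⟨i, hi⟩

noncomputable section

variable {X Y : Type*} [Fintype X]

def marginalFst [Fintype Y] (μ : X × Y → ℝ) (x : X) : ℝ := ∑ y, μ (x, y)

def marginalSnd (μ : X × Y → ℝ) (y : Y) : ℝ := ∑ x, μ (x, y)

/-- The conditional expectation `f̂(y) = E[f(X) | Y = y]`. -/
def condMean (μ : X × Y → ℝ) (f : X → ℝ) (y : Y) : ℝ :=
  ∑ x, f x * (μ (x, y) / marginalSnd μ y)

/-- The covariance of `f(X)` and `f̂(Y)`. -/
def covCondMean [Fintype Y] (μ : X × Y → ℝ) (f : X → ℝ) : ℝ :=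
  (∑ x, ∑ y, μ (x, y) * f x * condMean μ f y) -
    (∑ x, marginalFst μ x * f x) * (∑ y, marginalSnd μ y * condMean μ f y)

variable {μ : X × Y → ℝ}

theorem sum_marginalSnd [Fintype Y] (μ : X × Y → ℝ) : ∑ y, marginalSnd μ y = ∑ z, μ z := by
  rw [Fintype.sum_prod_type, sum_comm]
  rfl

theorem marginalSnd_mul_condMean {y : Y} (hy : marginalSnd μ y ≠ 0) (f : X → ℝ) :
    marginalSnd μ y * condMean μ f y = ∑ x, μ (x, y) * f x := by
  rw [condMean, mul_sum]
  refine sum_congr rfl fun x _ => ?_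
  field_simp

theorem sum_marginalSnd_mul_condMean [Fintype Y] (hY : ∀ y, marginalSnd μ y ≠ 0) (f : X → ℝ) :
    ∑ y, marginalSnd μ y * condMean μ f y = ∑ x, marginalFst μ x * f x := by
  simp only [marginalSnd_mul_condMean (hY _), marginalFst, sum_mul]
  exact sum_comm

theorem sum_sum_mul_condMean [Fintype Y] (hY : ∀ y, marginalSnd μ y ≠ 0) (f : X → ℝ) :
    ∑ x, ∑ y, μ (x, y) * f x * condMean μ f y = ∑ y, marginalSnd μ y * condMean μ f y ^ 2 := by
  rw [sum_comm]
  refine sum_congr rfl fun y _ => ?_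
  rw [sq, ← mul_assoc, marginalSnd_mul_condMean (hY y), sum_mul]

theorem covCondMean_eq_sum_sq [Fintype Y] (hμ : ∑ z, μ z = 1) (hY : ∀ y, marginalSnd μ y ≠ 0)
    (f : X → ℝ) :
    covCondMean μ f =
      ∑ y, marginalSnd μ y * (condMean μ f y - ∑ x, marginalFst μ x * f x) ^ 2 := by
  set m := ∑ x, marginalFst μ x * f x
  have hmean : ∑ y, marginalSnd μ y * condMean μ f y = m := sum_marginalSnd_mul_condMean hY f
  have hmass : ∑ y, marginalSnd μ y = 1 := (sum_marginalSnd μ).trans hμ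
  calc covCondMean μ f
      = ∑ y, marginalSnd μ y * condMean μ f y ^ 2 - 2 * m * m + m ^ 2 * 1 := by
        rw [covCondMean, sum_sum_mul_condMean hY, hmean]
        ring
    _ = ∑ y, (marginalSnd μ y * condMean μ f y ^ 2
          - 2 * m * (marginalSnd μ y * condMean μ f y) + m ^ 2 * marginalSnd μ y) := by
        rw [sum_add_distrib, sum_sub_distrib, ← mul_sum, ← mul_sum, hmean, hmass]
    _ = _ := sum_congr rfl fun y _ => by ring

theorem condMean_single [DecidableEq X] (x₀ : X) (y : Y) :
    condMean μ (Pi.single x₀ 1) y = μ (x₀, y) / marginalSnd μ y := by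
  simp [condMean, Pi.single_apply]

theorem sq_sum_abs_sub_le_covCondMean_single [Fintype Y] [DecidableEq X] (hμ : ∑ z, μ z = 1)
    (hY : ∀ y, 0 < marginalSnd μ y) (x₀ : X) :
    (∑ y, |μ (x₀, y) - marginalFst μ x₀ * marginalSnd μ y|) ^ 2 ≤
      covCondMean μ (Pi.single x₀ 1) := by
  have hrow : ∀ y, |μ (x₀, y) - marginalFst μ x₀ * marginalSnd μ y| =
      marginalSnd μ y * |μ (x₀, y) / marginalSnd μ y - marginalFst μ x₀| := by
    intro y
    rw [← abs_of_pos (hY y), ← abs_mul, abs_of_pos (hY y), mul_sub,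
      mul_div_cancel₀ _ (hY y).ne', mul_comm (marginalSnd μ y)]
  rw [covCondMean_eq_sum_sq hμ fun y => (hY y).ne']
  simp only [condMean_single, Pi.single_apply, mul_ite, mul_one, mul_zero, sum_ite_eq',
    mem_univ, if_true, hrow]
  simpa only [sq_abs] using sq_sum_mul_le_sum_mul_sq univ
    (d := fun y => |μ (x₀, y) / marginalSnd μ y - marginalFst μ x₀|) (fun y _ => (hY y).le)
    ((sum_marginalSnd μ).trans hμ)

theorem continuous_covCondMean [Fintype Y] : Continuous (covCondMean μ) := by
  unfold covCondMean condMean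
  fun_prop

theorem bddAbove_abs_covCondMean [Fintype Y] :
    BddAbove {v | ∃ f : X → ℝ, (∀ x, |f x| ≤ 1) ∧ v = |covCondMean μ f|} := by
  refine ((isCompact_Icc (a := (-1 : X → ℝ)) (b := 1)).bddAbove_image
    (continuous_covCondMean (μ := μ)).abs.continuousOn).mono ?_
  rintro _ ⟨f, hf, rfl⟩
  exact ⟨f, ⟨fun x => (abs_le.1 (hf x)).1, fun x => (abs_le.1 (hf x)).2⟩, rfl⟩

end

theorem stmt_6_general {X Y : Type*} [Fintype X] [Fintype Y] (μ : X × Y → ℝ)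
    (hμs : ∑ z, μ z = 1)
    (hposY : ∀ y, 0 < ∑ x, μ (x, y)) :
    let μX : X → ℝ := fun x => ∑ y, μ (x, y)
    let μY : Y → ℝ := fun y => ∑ x, μ (x, y)
    let fhat : (X → ℝ) → Y → ℝ := fun f y => ∑ x, f x * (μ (x, y) / μY y)
    let G3 : ℝ := sSup {v : ℝ | ∃ f : X → ℝ, (∀ x, |f x| ≤ 1) ∧
      v = |(∑ x, ∑ y, μ (x, y) * f x * fhat f y) -
            (∑ x, μX x * f x) * (∑ y, μY y * fhat f y)|}
    let G2 : ℝ := ∑ x, ∑ y, |μ (x, y) - μX x * μY y|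
    (G2 / (Fintype.card X))^2 ≤ G3 := by
  intro μX μY fhat G3 G2
  classical
  have : Nonempty X := by
    by_contra hX
    rw [not_nonempty_iff] at hX
    simp at hμs
  obtain ⟨x₀, hx₀⟩ := exists_sum_div_card_le fun x => ∑ y, |μ (x, y) - μX x * μY y|
  have hcov := sq_sum_abs_sub_le_covCondMean_single hμs hposY x₀
  have hsingle : ∀ x, |(Pi.single x₀ 1 : X → ℝ) x| ≤ 1 := fun x => by
    rw [Pi.single_apply]; split_ifs <;> simp
  calc (G2 / Fintype.card X) ^ 2 ≤ (∑ y, |μ (x₀, y) - μX x₀ * μY y|) ^ 2 := by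
        gcongr
    _ ≤ covCondMean μ (Pi.single x₀ 1) := hcov
    _ ≤ G3 := le_csSup bddAbove_abs_covCondMean
        ⟨_, hsingle, (abs_of_nonneg ((sq_nonneg _).trans hcov)).symm⟩

theorem stmt_6 {X Y : Type*} [Fintype X] [Fintype Y] (μ : X × Y → ℝ)
    (hμ : ∀ z, 0 ≤ μ z) (hμs : ∑ z, μ z = 1)
    (hposY : ∀ y, 0 < ∑ x, μ (x, y)) :
    let μX : X → ℝ := fun x => ∑ y, μ (x, y)
    let μY : Y → ℝ := fun y => ∑ x, μ (x, y)
    let fhat : (X → ℝ) → Y → ℝ := fun f y => ∑ x, f x * (μ (x, y) / μY y)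
    let G3 : ℝ := sSup {v : ℝ | ∃ f : X → ℝ, (∀ x, |f x| ≤ 1) ∧
      v = |(∑ x, ∑ y, μ (x, y) * f x * fhat f y) -
            (∑ x, μX x * f x) * (∑ y, μY y * fhat f y)|}
    let G2 : ℝ := ∑ x, ∑ y, |μ (x, y) - μX x * μY y|
    (G2 / (Fintype.card X))^2 ≤ G3 :=
  stmt_6_general μ hμs hposY
end

section
/- With the same notation, I(X;Y) ≤ (1/μ_* - 1) ∑_{x,y} |μ(x,y) - μ(x)μ(y)|, where μ_* = min_x μ(x) > 0. -/
theorem stmt_8 {X Y : Type*} [Fintype X] [Fintype Y] [Nonempty X] (μ : X × Y → ℝ)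
    (hμ : ∀ z, 0 ≤ μ z) (hμs : ∑ z, μ z = 1)
    (hpos : ∀ x, 0 < ∑ y, μ (x, y)) :
    let μX : X → ℝ := fun x => ∑ y, μ (x, y)
    let μY : Y → ℝ := fun y => ∑ x, μ (x, y)
    let μstar : ℝ := ⨅ x : X, μX x
    let I : ℝ := ∑ x, ∑ y, if μ (x, y) = 0 then 0
      else μ (x, y) * Real.log (μ (x, y) / (μX x * μY y))
    I ≤ (1 / μstar - 1) * ∑ x, ∑ y, |μ (x, y) - μX x * μY y| := by
  intro μX μY μstar I
  classical
  have hμX : ∀ x, 0 < μX x := hpos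
  have hμY : ∀ y, 0 ≤ μY y := fun y => Finset.sum_nonneg fun x _ => hμ _
  have hle : ∀ x y, μ (x, y) ≤ μY y := fun x y =>
    Finset.single_le_sum (fun x' _ => hμ (x', y)) (Finset.mem_univ x)
  have hμXs : ∑ x, μX x = 1 := by
    rw [← hμs, ← Fintype.sum_prod_type]
  have hμYs : ∑ y, μY y = 1 := by
    rw [← hμs, Fintype.sum_prod_type]
    exact (Finset.sum_comm (γ := X) (α := Y) (f := fun x y => μ (x, y))).symm
  have hbdd : BddBelow (Set.range μX) := Set.Finite.bddBelow (Set.finite_range μX)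
  have hstar_le : ∀ x, μstar ≤ μX x := fun x => ciInf_le hbdd x
  obtain ⟨x₀, hx₀⟩ := Finite.exists_min μX
  have hstar_eq : μstar = μX x₀ := le_antisymm (hstar_le x₀) (le_ciInf hx₀)
  have hstar_pos : 0 < μstar := hstar_eq ▸ hμX x₀
  have hstar_one : μstar ≤ 1 := by
    calc μstar ≤ μX x₀ := hstar_le x₀
    _ ≤ ∑ x, μX x := Finset.single_le_sum (fun x _ => (hμX x).le) (Finset.mem_univ x₀)
    _ = 1 := hμXs
  have hc : 0 ≤ 1 / μstar - 1 := by
    rw [sub_nonneg, le_div_iff₀ hstar_pos, one_mul]; exact hstar_one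
  have hhalf : μstar ≤ 1 / 2 ∨ ∀ x y, μ (x, y) = μX x * μY y := by
    by_cases hcard : 1 < Fintype.card X
    · left
      obtain ⟨x₁, hx₁⟩ := Fintype.exists_ne_of_one_lt_card hcard x₀
      have hsub : ({x₁, x₀} : Finset X) ⊆ Finset.univ := Finset.subset_univ _
      have h2 : μX x₁ + μX x₀ ≤ ∑ x, μX x := by
        rw [← Finset.sum_pair hx₁]
        exact Finset.sum_le_sum_of_subset_of_nonneg hsub (fun x _ _ => (hμX x).le)
      have := hstar_le x₀
      have := hstar_le x₁
      rw [hμXs] at h2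
      linarith
    · right
      have hsub : Subsingleton X := Fintype.card_le_one_iff_subsingleton.mp (not_lt.mp hcard)
      intro x y
      have h1 : μX x = 1 := by
        rw [← hμXs]
        exact (Finset.sum_eq_single_of_mem x (Finset.mem_univ x)
          (fun b _ hb => absurd (Subsingleton.elim b x) hb)).symm
      have h2 : μY y = μ (x, y) :=
        Finset.sum_eq_single_of_mem x (Finset.mem_univ x)
          (fun b _ hb => absurd (Subsingleton.elim b x) hb)
      rw [h1, h2, one_mul]
  -- pointwise bound 1
  have key1 : ∀ x y, (if μ (x, y) = 0 then (0:ℝ)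
      else μ (x, y) * Real.log (μ (x, y) / (μX x * μY y))) ≤
      (if μX x * μY y = 0 then (0:ℝ)
        else (μ (x, y) - μX x * μY y) ^ 2 / (μX x * μY y)) + (μ (x, y) - μX x * μY y) := by
    intro x y
    by_cases h0 : μ (x, y) = 0
    · rw [if_pos h0, h0]
      by_cases hp : μX x * μY y = 0
      · rw [if_pos hp, hp]; norm_num
      · rw [if_neg hp]
        have hp' : 0 < μX x * μY y :=
          lt_of_le_of_ne (mul_nonneg (hμX x).le (hμY y)) (Ne.symm hp)
        have : (0 - μX x * μY y) ^ 2 / (μX x * μY y) = μX x * μY y := by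
          field_simp [(hμX x).ne', right_ne_zero_of_mul hp]; ring
        rw [this]; linarith
    · have hμ0 : 0 < μ (x, y) := lt_of_le_of_ne (hμ _) (Ne.symm h0)
      have hY0 : 0 < μY y := lt_of_lt_of_le hμ0 (hle x y)
      have hp' : 0 < μX x * μY y := mul_pos (hμX x) hY0
      rw [if_neg h0, if_neg (ne_of_gt hp')]
      have hlog : Real.log (μ (x, y) / (μX x * μY y)) ≤ μ (x, y) / (μX x * μY y) - 1 :=
        Real.log_le_sub_one_of_pos (div_pos hμ0 hp')
      have h1 : μ (x, y) * Real.log (μ (x, y) / (μX x * μY y)) ≤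
          μ (x, y) * (μ (x, y) / (μX x * μY y) - 1) :=
        mul_le_mul_of_nonneg_left hlog hμ0.le
      have h2 : μ (x, y) * (μ (x, y) / (μX x * μY y) - 1) =
          (μ (x, y) - μX x * μY y) ^ 2 / (μX x * μY y) + (μ (x, y) - μX x * μY y) := by
        field_simp [(hμX x).ne', hY0.ne']; ring
      linarith
  -- pointwise bound 2
  have key2 : ∀ x y, (if μX x * μY y = 0 then (0:ℝ)
      else (μ (x, y) - μX x * μY y) ^ 2 / (μX x * μY y)) ≤
      (1 / μstar - 1) * |μ (x, y) - μX x * μY y| := by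
    intro x y
    by_cases hp : μX x * μY y = 0
    · rw [if_pos hp]
      exact mul_nonneg hc (abs_nonneg _)
    · rw [if_neg hp]
      have hp' : 0 < μX x * μY y :=
        lt_of_le_of_ne (mul_nonneg (hμX x).le (hμY y)) (Ne.symm hp)
      have habs : |μ (x, y) - μX x * μY y| ≤ (1 / μstar - 1) * (μX x * μY y) := by
        rw [abs_le]
        constructor
        · -- p - μ ≤ c * p, lower bound
          rcases hhalf with hh | hh
          · have h1 : (1:ℝ) ≤ 1 / μstar - 1 := by
              rw [le_sub_iff_add_le, le_div_iff₀ hstar_pos]; linarith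
            have := hμ (x, y)
            nlinarith
          · rw [hh x y, sub_self]
            linarith [mul_nonneg hc hp'.le]
        · -- μ - p ≤ c * p, upper bound
          have h1 : μ (x, y) * μstar ≤ μX x * μY y := by
            calc μ (x, y) * μstar ≤ μY y * μX x :=
              mul_le_mul (hle x y) (hstar_le x) hstar_pos.le (hμY y)
            _ = μX x * μY y := mul_comm _ _
          have h2 : μ (x, y) ≤ μX x * μY y / μstar := (le_div_iff₀ hstar_pos).mpr h1
          have h3 : (1 / μstar - 1) * (μX x * μY y) = μX x * μY y / μstar - μX x * μY y := by
            ring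
          linarith
      have hsq : (μ (x, y) - μX x * μY y) ^ 2 = |μ (x, y) - μX x * μY y| ^ 2 := (sq_abs _).symm
      rw [hsq, div_le_iff₀ hp']
      calc |μ (x, y) - μX x * μY y| ^ 2
          = |μ (x, y) - μX x * μY y| * |μ (x, y) - μX x * μY y| := sq _
        _ ≤ |μ (x, y) - μX x * μY y| * ((1 / μstar - 1) * (μX x * μY y)) :=
            mul_le_mul_of_nonneg_left habs (abs_nonneg _)
        _ = 1 / μstar * |μ (x, y) - μX x * μY y| * (μX x * μY y)
            - |μ (x, y) - μX x * μY y| * (μX x * μY y) := by ring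
        _ = (1 / μstar - 1) * |μ (x, y) - μX x * μY y| * (μX x * μY y) := by ring
  have hsum0 : ∑ x, ∑ y, (μ (x, y) - μX x * μY y) = 0 := by
    have h1 : ∑ x, ∑ y, μ (x, y) = 1 := by rw [← Fintype.sum_prod_type]; exact hμs
    have h2 : ∑ x, ∑ y, μX x * μY y = 1 := by
      simp_rw [← Finset.mul_sum, hμYs, mul_one]; exact hμXs
    simp only [Finset.sum_sub_distrib, h1, h2, sub_self]
  calc I ≤ ∑ x, ∑ y, ((if μX x * μY y = 0 then (0:ℝ)
        else (μ (x, y) - μX x * μY y) ^ 2 / (μX x * μY y)) + (μ (x, y) - μX x * μY y)) :=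
      Finset.sum_le_sum fun x _ => Finset.sum_le_sum fun y _ => key1 x y
    _ = (∑ x, ∑ y, (if μX x * μY y = 0 then (0:ℝ)
        else (μ (x, y) - μX x * μY y) ^ 2 / (μX x * μY y)))
        + ∑ x, ∑ y, (μ (x, y) - μX x * μY y) := by
      simp only [Finset.sum_add_distrib]
    _ = ∑ x, ∑ y, (if μX x * μY y = 0 then (0:ℝ)
        else (μ (x, y) - μX x * μY y) ^ 2 / (μX x * μY y)) := by
      rw [hsum0, add_zero]
    _ ≤ ∑ x, ∑ y, (1 / μstar - 1) * |μ (x, y) - μX x * μY y| :=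
      Finset.sum_le_sum fun x _ => Finset.sum_le_sum fun y _ => key2 x y
    _ = (1 / μstar - 1) * ∑ x, ∑ y, |μ (x, y) - μX x * μY y| := by
      simp_rw [← Finset.mul_sum]
end

section
/- For probability distributions p, q on a finite set Z with q(z) > 0 for all z, the Kullback-Leibler divergence admits the integral representation D(p||q) = ∫_0^1 (1-λ) ∑_z (p(z)-q(z))²/p_λ(z) dλ, where p_λ(z) = (1-λ)q(z) + λ p(z). -/
open MeasureTheory intervalIntegral

lemma denom_pos {a b : ℝ} (ha : 0 < a) (hb : 0 < b) {l : ℝ} (h0 : 0 ≤ l) (h1 : l ≤ 1) :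
    0 < (1 - l) * b + l * a := by
  rcases eq_or_lt_of_le h1 with rfl | h1
  · simpa using ha
  · have : 0 < (1 - l) * b := mul_pos (by linarith) hb
    nlinarith [mul_nonneg h0 ha.le]

lemma ae_ne_one : ∀ᵐ l : ℝ, l ≠ 1 :=
  compl_mem_ae_iff.mpr (measure_singleton 1)

lemma intg (a b : ℝ) (ha : 0 ≤ a) (hb : 0 < b) :
    IntervalIntegrable (fun l => (1 - l) * (a - b)^2 / ((1 - l) * b + l * a)) volume 0 1 := by
  rcases eq_or_lt_of_le ha with rfl | ha
  · refine (_root_.intervalIntegrable_const (c := b)).congr_ae ?_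
    filter_upwards [ae_restrict_of_ae ae_ne_one] with l hl
    have h1 : (1 : ℝ) - l ≠ 0 := by intro h; apply hl; linarith
    field_simp
    ring
  · apply ContinuousOn.intervalIntegrable
    apply ContinuousOn.div (by fun_prop) (by fun_prop)
    intro l hl
    rw [Set.uIcc_of_le (by norm_num)] at hl
    exact (denom_pos ha hb hl.1 hl.2).ne'

lemma key (a b : ℝ) (ha : 0 ≤ a) (hb : 0 < b) :
    ∫ l in (0:ℝ)..1, (1 - l) * (a - b)^2 / ((1 - l) * b + l * a)
      = (if a = 0 then 0 else a * Real.log (a / b)) - (a - b) := by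
  rcases eq_or_lt_of_le ha with rfl | ha
  · have : ∫ l in (0:ℝ)..1, (1 - l) * (0 - b)^2 / ((1 - l) * b + l * 0)
        = ∫ (_l : ℝ) in (0:ℝ)..1, b := by
      apply intervalIntegral.integral_congr_ae
      filter_upwards [ae_ne_one] with l hl _
      have h1 : (1 : ℝ) - l ≠ 0 := by intro h; apply hl; linarith
      field_simp
      ring
    rw [this]
    simp
  · have hne : a ≠ 0 := ha.ne'
    rw [if_neg hne]
    have hderiv : ∀ l ∈ Set.uIcc (0:ℝ) 1,
        HasDerivAt (fun l => a * Real.log ((1 - l) * b + l * a) - (a - b) * l)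
          ((1 - l) * (a - b)^2 / ((1 - l) * b + l * a)) l := by
      intro l hl
      rw [Set.uIcc_of_le (by norm_num)] at hl
      have hm : 0 < (1 - l) * b + l * a := denom_pos ha hb hl.1 hl.2
      have h1 : HasDerivAt (fun l : ℝ => (1 - l) * b + l * a) (a - b) l := by
        have := ((hasDerivAt_id l).const_sub 1).mul_const b |>.add ((hasDerivAt_id l).mul_const a)
        exact this.congr_deriv (by ring)
      have h2 := ((h1.log hm.ne').const_mul a).sub ((hasDerivAt_id l).const_mul (a - b))
      refine h2.congr_deriv ?_
      rw [mul_div_assoc', mul_one, eq_div_iff hm.ne', sub_mul, div_mul_cancel₀ _ hm.ne']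
      ring
    rw [integral_eq_sub_of_hasDerivAt hderiv (intg a b ha.le hb)]
    have hab : a / b > 0 := div_pos ha hb
    rw [Real.log_div ha.ne' hb.ne']
    simp
    ring

theorem stmt_9 {Z : Type*} [Fintype Z] (p q : Z → ℝ)
    (hp : ∀ z, 0 ≤ p z) (hq : ∀ z, 0 < q z)
    (hps : ∑ z, p z = 1) (hqs : ∑ z, q z = 1) :
    (∑ z, if p z = 0 then 0 else p z * Real.log (p z / q z))
      = ∫ l in (0:ℝ)..1, (1 - l) * ∑ z, (p z - q z)^2 / ((1 - l) * q z + l * p z) := by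
  have h1 : ∀ l : ℝ, (1 - l) * ∑ z, (p z - q z)^2 / ((1 - l) * q z + l * p z)
      = ∑ z, (1 - l) * (p z - q z)^2 / ((1 - l) * q z + l * p z) := by
    intro l
    rw [Finset.mul_sum]
    exact Finset.sum_congr rfl fun z _ => (mul_div_assoc _ _ _).symm
  simp_rw [h1]
  rw [intervalIntegral.integral_finset_sum (fun z _ => intg (p z) (q z) (hp z) (hq z))]
  have h2 : ∀ z : Z, ∫ l in (0:ℝ)..1, (1 - l) * (p z - q z)^2 / ((1 - l) * q z + l * p z)
      = (if p z = 0 then 0 else p z * Real.log (p z / q z)) - (p z - q z) :=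
    fun z => key (p z) (q z) (hp z) (hq z)
  simp_rw [h2]
  rw [Finset.sum_sub_distrib, Finset.sum_sub_distrib, hps, hqs]
  ring
end

section
/- For all real numbers a and b, |tanh(a) - tanh(b)| ≤ 2 tanh(|a - b|/2). -/
theorem stmt_10 (a b : ℝ) :
    |Real.tanh a - Real.tanh b| ≤ 2 * Real.tanh (|a - b| / 2) := by
  wlog h : b ≤ a with H
  · have := H b a (le_of_not_ge h)
    rwa [abs_sub_comm, abs_sub_comm b a] at this
  set d := a - b with hd
  have hd0 : 0 ≤ d := sub_nonneg.2 h
  have habs : |a - b| = d := abs_of_nonneg hd0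
  have hca := Real.cosh_pos a
  have hcb := Real.cosh_pos b
  have hcd := Real.cosh_pos (d / 2)
  have hts : Real.tanh a - Real.tanh b
      = Real.sinh d / (Real.cosh a * Real.cosh b) := by
    rw [Real.tanh_eq_sinh_div_cosh, Real.tanh_eq_sinh_div_cosh,
      div_sub_div _ _ (ne_of_gt hca) (ne_of_gt hcb)]
    congr 1
    rw [hd, Real.sinh_sub]
  have hsd0 : 0 ≤ Real.sinh d := Real.sinh_nonneg_iff.2 hd0
  have htmono : Real.tanh b ≤ Real.tanh a := by
    have : 0 ≤ Real.sinh d / (Real.cosh a * Real.cosh b) := by positivity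
    linarith [hts ▸ this]
  rw [habs, abs_of_nonneg (sub_nonneg.2 htmono)]
  have hch : Real.cosh (d / 2) ^ 2 ≤ Real.cosh a * Real.cosh b := by
    have h1 : Real.cosh a * Real.cosh b
        = (Real.cosh (a + b) + Real.cosh (a - b)) / 2 := by
      rw [Real.cosh_add, Real.cosh_sub]; ring
    have h2 : Real.cosh d = 2 * Real.cosh (d / 2) ^ 2 - 1 := by
      have := Real.cosh_two_mul (d / 2)
      have hsq := Real.cosh_sq (d / 2)
      have : Real.cosh (2 * (d / 2)) = 2 * Real.cosh (d / 2) ^ 2 - 1 := by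
        rw [Real.cosh_two_mul]; nlinarith
      rwa [show 2 * (d / 2) = d by ring] at this
    have h3 : 1 ≤ Real.cosh (a + b) := Real.one_le_cosh _
    rw [h1, ← hd]
    nlinarith
  have hsh : 0 ≤ Real.sinh (d / 2) := Real.sinh_nonneg_iff.2 (by positivity)
  have hsd : Real.sinh d = 2 * Real.sinh (d / 2) * Real.cosh (d / 2) := by
    have := Real.sinh_two_mul (d / 2)
    rwa [show 2 * (d / 2) = d by ring] at this
  rw [hts, Real.tanh_eq_sinh_div_cosh, hsd]
  rw [div_le_iff₀ (by positivity)]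
  have heq : 2 * Real.sinh (d / 2) * Real.cosh (d / 2)
      = 2 * (Real.sinh (d / 2) / Real.cosh (d / 2)) * Real.cosh (d / 2) ^ 2 := by
    field_simp
  rw [heq]
  exact mul_le_mul_of_nonneg_left hch (by positivity)
end
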